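/- arXiv:1407.3880 — 2 statements merged into one kernel-verified Lean document; each statement's English description precedes it below -/
import Mathlib

section
/- Let a, b, b', a' be positive integers with a ≤ b ≤ b' ≤ a' and a + a' = b + b'. Then φ(a)·φ(a') ≥ φ(b)·φ(b'). -/
/-- Number of rooted binary phylogenetic trees on `m` leaves:
`phi m = (2m-2)! / (2^(m-1) * (m-1)!)` (so `phi m = (2m-3)!!` for `m ≥ 2`, `phi 1 = 1`). -/
noncomputable def phi (m : ℕ) : ℝ :=
  (Nat.factorial (2 * m - 2) : ℝ) / ((2 : ℝ) ^ (m - 1) * (Nat.factorial (m - 1) : ℝ))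

/-- Clade probability of a fixed subset of size `a` among `n` leaves under the YHK model:
`p_n(a) = (2n/(a(a+1))) * C(n,a)⁻¹` for `a < n`, and `p_n(n) = 1`. -/
noncomputable def pYHK (n a : ℕ) : ℝ :=
  if a = n then 1 else (2 * (n : ℝ) / ((a : ℝ) * ((a : ℝ) + 1))) * ((n.choose a : ℝ))⁻¹

/-- Clade probability under the PDA model:
`q_n(a) = C(n-1,a-1) * C(2n-2,2a-2)⁻¹` for `a < n`, and `q_n(n) = 1`. -/
noncomputable def qPDA (n a : ℕ) : ℝ :=
  if a = n then 1
  else (((n - 1).choose (a - 1) : ℝ)) * ((((2 * n - 2).choose (2 * a - 2)) : ℝ))⁻¹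

/-- `p_n(a, n-a) = (2/(n-1)) * C(n,a)⁻¹`: the YHK probability that both a fixed subset of
size `a` and its complement are clades. -/
noncomputable def pPair (n a : ℕ) : ℝ :=
  (2 / ((n : ℝ) - 1)) * ((n.choose a : ℝ))⁻¹

/-- `q_n(a, n-a) = (1/(2n-2a-1)) * C(n-1,a-1) * C(2n-2,2a-2)⁻¹`: the PDA probability that
both a fixed subset of size `a` and its complement are clades. -/
noncomputable def qPair (n a : ℕ) : ℝ :=
  (1 / (2 * (n : ℝ) - 2 * (a : ℝ) - 1)) * (((n - 1).choose (a - 1) : ℝ)) *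
    ((((2 * n - 2).choose (2 * a - 2)) : ℝ))⁻¹

/-- Clan probability of a fixed subset of size `a` under the YHK model:
`p*_n(a) = 2n * [1/(a(a+1)) + 1/((n-a)(n-a+1)) - 1/(n(n-1))] * C(n,a)⁻¹`. -/
noncomputable def pStar (n a : ℕ) : ℝ :=
  2 * (n : ℝ) *
    (1 / ((a : ℝ) * ((a : ℝ) + 1)) + 1 / (((n : ℝ) - (a : ℝ)) * ((n : ℝ) - (a : ℝ) + 1)) -
      1 / ((n : ℝ) * ((n : ℝ) - 1))) * ((n.choose a : ℝ))⁻¹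

/-- Clan probability of a fixed subset of size `a` under the PDA model:
`q*_n(a) = phi(a) * phi(n-a) / phi(n-1)`. -/
noncomputable def qStar (n a : ℕ) : ℝ := phi a * phi (n - a) / phi (n - 1)

/-- `u_n(a) = a(a+1)/(n(n-1)) - 1/(2n-2a-1)`: difference of the conditional probabilities
(YHK minus PDA) that both a clade `A` of size `a` and its complement are clades, given `A`
is a clade. -/
noncomputable def uDiff (n a : ℕ) : ℝ :=
  (a : ℝ) * ((a : ℝ) + 1) / ((n : ℝ) * ((n : ℝ) - 1)) - 1 / (2 * (n : ℝ) - 2 * (a : ℝ) - 1)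


lemma phi_pos (m : ℕ) : 0 < phi m := by
  unfold phi
  positivity

lemma phi_succ' (n : ℕ) : phi (n + 2) = (2 * n + 1) * phi (n + 1) := by
  unfold phi
  have h1 : 2 * (n + 2) - 2 = 2 * n + 2 := by omega
  have h2 : (n + 2) - 1 = n + 1 := by omega
  have h3 : 2 * (n + 1) - 2 = 2 * n := by omega
  have h4 : (n + 1) - 1 = n := by omega
  rw [h1, h2, h3, h4, show 2 * n + 2 = (2 * n + 1) + 1 by ring, Nat.factorial_succ,
    Nat.factorial_succ (2 * n), Nat.factorial_succ n]
  have hf : ((2 * n).factorial : ℝ) ≠ 0 := Nat.cast_ne_zero.mpr (Nat.factorial_ne_zero (2 * n))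
  have hg : ((n).factorial : ℝ) ≠ 0 := Nat.cast_ne_zero.mpr (Nat.factorial_ne_zero n)
  have hp : ((2 : ℝ) ^ n) ≠ 0 := by positivity
  push_cast
  field_simp
  ring

lemma phi_step (k j : ℕ) (h : k ≤ j) :
    phi (k + 2) * phi (j + 1) ≤ phi (k + 1) * phi (j + 2) := by
  rw [phi_succ' k, phi_succ' j]
  have hk := phi_pos (k + 1)
  have hj := phi_pos (j + 1)
  nlinarith [mul_pos hk hj, (by exact_mod_cast h : (k : ℝ) ≤ j)]

lemma phi_key : ∀ d k m, 1 ≤ k → k + d ≤ m →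
    phi (k + d) * phi m ≤ phi k * phi (m + d) := by
  intro d
  induction d with
  | zero => intro k m _ _; simp
  | succ d ih =>
    intro k m hk hkm
    obtain ⟨k', rfl⟩ : ∃ k', k = k' + 1 := ⟨k - 1, by omega⟩
    obtain ⟨m', rfl⟩ : ∃ m', m = m' + 1 := ⟨m - 1, by omega⟩
    have e1 : k' + 1 + (d + 1) = k' + 2 + d := by omega
    have e2 : m' + 1 + (d + 1) = m' + d + 2 := by omega
    rw [e1, e2]
    calc phi (k' + 2 + d) * phi (m' + 1)
        ≤ phi (k' + 2) * phi (m' + 1 + d) := ih (k' + 2) (m' + 1) (by omega) (by omega)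
      _ = phi (k' + 2) * phi (m' + d + 1) := by rw [show m' + 1 + d = m' + d + 1 from by omega]
      _ ≤ phi (k' + 1) * phi (m' + d + 2) := phi_step k' (m' + d) (by omega)

/-- `phi(a) phi(a') ≥ phi(b) phi(b')` when `a ≤ b ≤ b' ≤ a'`
and `a + a' = b + b'`. -/
theorem phi_spread_ineq (a b b' a' : ℕ) (ha : 1 ≤ a) (hab : a ≤ b) (hbb : b ≤ b')
    (hba : b' ≤ a') (hsum : a + a' = b + b') :
    phi a * phi a' ≥ phi b * phi b' := by
  have hd : b = a + (b - a) := by omega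
  have hd' : a' = b' + (b - a) := by omega
  rw [hd, hd']
  exact phi_key (b - a) a b' ha (by omega)
end

section
/- For every integer n > 5, p*_n(⌊n/2⌋) < q*_n(⌊n/2⌋). -/
/-- Lower bound for the central binomial coefficient: `16^n ≤ 4n * C(2n,n)^2` for `n ≥ 1`. -/
lemma lemA : ∀ n : ℕ, 1 ≤ n → (16:ℝ)^n ≤ 4*(n:ℝ)*(Nat.centralBinom n : ℝ)^2 := by
  intro n
  induction n with
  | zero => omega
  | succ k ih =>
    intro _
    rcases Nat.eq_zero_or_pos k with hk | hk
    · subst hk; norm_num [Nat.centralBinom, Nat.choose]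
    · have ih' := ih hk
      set c : ℝ := (Nat.centralBinom k : ℝ) with hc
      set c1 : ℝ := (Nat.centralBinom (k+1) : ℝ) with hc1
      have hs : ((k:ℝ)+1) * c1 = 2*(2*(k:ℝ)+1)*c := by
        have := Nat.succ_mul_centralBinom_succ k
        have h := congrArg (Nat.cast : ℕ → ℝ) this; push_cast at h; linarith [h]
      have hs2 : (((k:ℝ)+1) * c1)^2 = (2*(2*(k:ℝ)+1)*c)^2 := by rw [hs]
      have h1 : 16*((k:ℝ)+1)*(16:ℝ)^k ≤ 16*((k:ℝ)+1)*(4*(k:ℝ)*c^2) := by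
        apply mul_le_mul_of_nonneg_left ih' (by positivity)
      have h2 : 16*((k:ℝ)+1)*(4*(k:ℝ)*c^2) ≤ 16*(2*(k:ℝ)+1)^2*c^2 := by
        nlinarith [sq_nonneg c]
      have h4 : ((k:ℝ)+1) * (16:ℝ)^(k+1) ≤ ((k:ℝ)+1)*(4*((k:ℝ)+1)*c1^2) := by
        calc ((k:ℝ)+1) * (16:ℝ)^(k+1) = 16*((k:ℝ)+1)*(16:ℝ)^k := by ring
          _ ≤ 16*(2*(k:ℝ)+1)^2*c^2 := le_trans h1 h2
          _ = 4*(2*(2*(k:ℝ)+1)*c)^2 := by ring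
          _ = 4*(((k:ℝ)+1)*c1)^2 := by rw [hs2]
          _ = ((k:ℝ)+1)*(4*((k:ℝ)+1)*c1^2) := by ring
      have hpos : (0:ℝ) < (k:ℝ)+1 := by positivity
      have := le_of_mul_le_mul_left h4 hpos
      push_cast
      push_cast at this
      linarith

/-- Upper bound for the central binomial coefficient: `(3n+1) * C(2n,n)^2 ≤ 16^n`. -/
lemma lemB : ∀ n : ℕ, (3*(n:ℝ)+1)*(Nat.centralBinom n : ℝ)^2 ≤ (16:ℝ)^n := by
  intro n
  induction n with
  | zero => norm_num [Nat.centralBinom, Nat.choose]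
  | succ k ih =>
    set c : ℝ := (Nat.centralBinom k : ℝ) with hc
    set c1 : ℝ := (Nat.centralBinom (k+1) : ℝ) with hc1
    have hs : ((k:ℝ)+1) * c1 = 2*(2*(k:ℝ)+1)*c := by
      have := Nat.succ_mul_centralBinom_succ k
      have h := congrArg (Nat.cast : ℕ → ℝ) this; push_cast at h; linarith [h]
    have hs2 : (((k:ℝ)+1) * c1)^2 = (2*(2*(k:ℝ)+1)*c)^2 := by rw [hs]
    have h1 : ((3*(k:ℝ)+4)*(2*(k:ℝ)+1)^2*4) * ((3*(k:ℝ)+1)*c^2) ≤ ((3*(k:ℝ)+4)*(2*(k:ℝ)+1)^2*4) * (16:ℝ)^k := by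
      apply mul_le_mul_of_nonneg_left ih (by positivity)
    have h2 : ((3*(k:ℝ)+4)*(2*(k:ℝ)+1)^2*4) * (16:ℝ)^k ≤ ((3*(k:ℝ)+1)*((k:ℝ)+1)^2) * (16:ℝ)^(k+1) := by
      have hp : (3*(k:ℝ)+4)*(2*(k:ℝ)+1)^2*4 ≤ (3*(k:ℝ)+1)*((k:ℝ)+1)^2*16 := by nlinarith [Nat.cast_nonneg (α := ℝ) k]
      calc ((3*(k:ℝ)+4)*(2*(k:ℝ)+1)^2*4) * (16:ℝ)^k ≤ ((3*(k:ℝ)+1)*((k:ℝ)+1)^2*16) * (16:ℝ)^k := by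
            apply mul_le_mul_of_nonneg_right hp (by positivity)
        _ = ((3*(k:ℝ)+1)*((k:ℝ)+1)^2) * (16:ℝ)^(k+1) := by ring
    have h4 : ((3*(k:ℝ)+1)*((k:ℝ)+1)^2) * ((3*(k:ℝ)+4)*c1^2) ≤ ((3*(k:ℝ)+1)*((k:ℝ)+1)^2) * (16:ℝ)^(k+1) := by
      calc ((3*(k:ℝ)+1)*((k:ℝ)+1)^2) * ((3*(k:ℝ)+4)*c1^2)
          = (3*(k:ℝ)+1)*(3*(k:ℝ)+4)*(((k:ℝ)+1)*c1)^2 := by ring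
        _ = (3*(k:ℝ)+1)*(3*(k:ℝ)+4)*(2*(2*(k:ℝ)+1)*c)^2 := by rw [hs2]
        _ = ((3*(k:ℝ)+4)*(2*(k:ℝ)+1)^2*4) * ((3*(k:ℝ)+1)*c^2) := by ring
        _ ≤ ((3*(k:ℝ)+1)*((k:ℝ)+1)^2) * (16:ℝ)^(k+1) := le_trans h1 h2
    have hpos : (0:ℝ) < (3*(k:ℝ)+1)*((k:ℝ)+1)^2 := by positivity
    have := le_of_mul_le_mul_left h4 hpos
    push_cast
    push_cast at this
    linarith

lemma phi_succ (j : ℕ) : phi (j+1) = (Nat.factorial (2*j) : ℝ) / ((2:ℝ)^j * (Nat.factorial j : ℝ)) := by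
  have e1 : 2*(j+1)-2 = 2*j := by omega
  have e2 : (j+1)-1 = j := by omega
  rw [phi, e1, e2]

lemma centralBinom_fact (j : ℕ) :
    ((Nat.factorial (2*j) : ℝ)) = (Nat.centralBinom j : ℝ) * (Nat.factorial j : ℝ)^2 := by
  have h := Nat.choose_mul_factorial_mul_factorial (show j ≤ 2*j by omega)
  rw [show 2*j - j = j from by omega] at h
  have : (Nat.centralBinom j) * (Nat.factorial j) * (Nat.factorial j) = Nat.factorial (2*j) := h
  have hc := congrArg (Nat.cast : ℕ → ℝ) this
  push_cast at hc
  rw [← hc]; ring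

lemma qStar_even (k : ℕ) :
    qStar (2*(k+1)) (k+1) = (Nat.centralBinom k : ℝ) / (Nat.centralBinom (2*k) : ℝ) := by
  have e1 : 2*(k+1) - (k+1) = k+1 := by omega
  have e2 : 2*(k+1) - 1 = (2*k)+1 := by omega
  rw [qStar, e1, e2, phi_succ, phi_succ]
  rw [centralBinom_fact (2*k), centralBinom_fact k]
  have h1 : (Nat.factorial k : ℝ) ≠ 0 := by exact_mod_cast (Nat.factorial_pos k).ne'
  have h2 : ((Nat.factorial (2*k) : ℕ) : ℝ) ≠ 0 := by exact_mod_cast (Nat.factorial_pos (2*k)).ne'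
  have h3 : (Nat.centralBinom k : ℝ) ≠ 0 := by exact_mod_cast (Nat.centralBinom_pos k).ne'
  have h4 : (Nat.centralBinom (2*k) : ℝ) ≠ 0 := by exact_mod_cast (Nat.centralBinom_pos (2*k)).ne'
  have h5 : ((2:ℝ))^k ≠ 0 := by positivity
  have h6 : ((2:ℝ))^(2*k) ≠ 0 := by positivity
  field_simp
  ring

lemma qStar_odd (k : ℕ) :
    qStar (2*(k+1)+1) (k+1) =
      ((k:ℝ)+1) * (Nat.centralBinom (k+1) : ℝ) / ((2*(k:ℝ)+1) * (Nat.centralBinom (2*k+1) : ℝ)) := by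
  have e1 : 2*(k+1)+1 - (k+1) = (k+1)+1 := by omega
  have e2 : 2*(k+1)+1 - 1 = (2*k+1)+1 := by omega
  rw [qStar, e1, e2, phi_succ, phi_succ, phi_succ]
  rw [centralBinom_fact (k+1), centralBinom_fact (2*k+1)]
  have g1 : (Nat.factorial (2*k+1) : ℝ) = (2*(k:ℝ)+1) * (Nat.factorial (2*k) : ℝ) := by
    rw [show (2*k+1) = (2*k)+1 from rfl, Nat.factorial_succ]; push_cast; ring
  have g2 : (Nat.factorial (k+1) : ℝ) = ((k:ℝ)+1) * (Nat.factorial k : ℝ) := by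
    rw [Nat.factorial_succ]; push_cast; ring
  rw [g1, g2]
  have h1 : (Nat.factorial k : ℝ) ≠ 0 := by exact_mod_cast (Nat.factorial_pos k).ne'
  have h2 : ((Nat.factorial (2*k) : ℕ) : ℝ) ≠ 0 := by exact_mod_cast (Nat.factorial_pos (2*k)).ne'
  have h3 : (Nat.centralBinom (k+1) : ℝ) ≠ 0 := by exact_mod_cast (Nat.centralBinom_pos (k+1)).ne'
  have h4 : (Nat.centralBinom (2*k+1) : ℝ) ≠ 0 := by exact_mod_cast (Nat.centralBinom_pos (2*k+1)).ne'
  have h5 : ((2:ℝ))^k ≠ 0 := by positivity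
  have h6 : ((2:ℝ))^(k+1) ≠ 0 := by positivity
  have h7 : ((2:ℝ))^(2*k+1) ≠ 0 := by positivity
  have h8 : ((k:ℝ)+1) ≠ 0 := by positivity
  have h9 : (2*(k:ℝ)+1) ≠ 0 := by positivity
  field_simp
  ring

lemma pStar_even (k : ℕ) :
    pStar (2*(k+1)) (k+1) =
      (14*(k:ℝ)+4) / (((k:ℝ)+2)*(2*(k:ℝ)+1) * (Nat.centralBinom (k+1) : ℝ)) := by
  rw [pStar]
  rw [show (2*(k+1)).choose (k+1) = Nat.centralBinom (k+1) from rfl]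
  have h3 : (Nat.centralBinom (k+1) : ℝ) ≠ 0 := by exact_mod_cast (Nat.centralBinom_pos (k+1)).ne'
  have h8 : ((k:ℝ)+1) ≠ 0 := by positivity
  have h9 : (2*(k:ℝ)+1) ≠ 0 := by positivity
  have h10 : ((k:ℝ)+2) ≠ 0 := by positivity
  push_cast
  rw [show (2 * ((k:ℝ) + 1) - ((k:ℝ) + 1)) = (k:ℝ) + 1 from by ring]
  rw [show ((k:ℝ) + 1 + 1) = (k:ℝ) + 2 from by ring]
  rw [show (2 * ((k:ℝ) + 1) - 1) = 2 * (k:ℝ) + 1 from by ring]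
  field_simp
  ring

lemma pStar_odd (k : ℕ) :
    pStar (2*(k+1)+1) (k+1) =
      ((7*(k:ℝ)+9)*((k:ℝ)+2)) /
        (((k:ℝ)+1)*((k:ℝ)+3)*(2*(k:ℝ)+3) * (Nat.centralBinom (k+1) : ℝ)) := by
  have hsym : (2*(k+1)+1).choose (k+2) = (2*(k+1)+1).choose (k+1) := by
    rw [← Nat.choose_symm (show k+1 ≤ 2*(k+1)+1 by omega)]
    congr 1
    omega
  have hch : ((2*(k+1)+1).choose (k+1)) * (k+2) = (2*(k+1)+1) * Nat.centralBinom (k+1) := by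
    have h := Nat.add_one_mul_choose_eq (2*(k+1)) (k+1)
    rw [show (k+1+1) = (k+2) from rfl] at h
    rw [hsym] at h
    unfold Nat.centralBinom
    omega
  have hchR : (((2*(k+1)+1).choose (k+1) : ℕ) : ℝ) * ((k:ℝ)+2)
      = (2*(k:ℝ)+3) * (Nat.centralBinom (k+1) : ℝ) := by
    have hc := congrArg (Nat.cast : ℕ → ℝ) hch
    push_cast at hc
    linarith [hc]
  have h10 : ((k:ℝ)+2) ≠ 0 := by positivity
  have hcval : (((2*(k+1)+1).choose (k+1) : ℕ) : ℝ)
      = (2*(k:ℝ)+3) * (Nat.centralBinom (k+1) : ℝ) / ((k:ℝ)+2) := by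
    rw [eq_div_iff h10]; exact hchR
  rw [pStar, hcval]
  have h3 : (Nat.centralBinom (k+1) : ℝ) ≠ 0 := by exact_mod_cast (Nat.centralBinom_pos (k+1)).ne'
  have h8 : ((k:ℝ)+1) ≠ 0 := by positivity
  have h9 : (2*(k:ℝ)+3) ≠ 0 := by positivity
  have h11 : ((k:ℝ)+3) ≠ 0 := by positivity
  have h12 : (2*(k:ℝ)+2) ≠ 0 := by positivity
  have h13 : (2*(k:ℝ)+1) ≠ 0 := by positivity
  push_cast
  rw [show (2 * ((k:ℝ) + 1) + 1 - ((k:ℝ) + 1)) = (k:ℝ) + 2 from by ring]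
  rw [show ((k:ℝ) + 2 + 1) = (k:ℝ) + 3 from by ring]
  rw [show ((k:ℝ) + 1 + 1) = (k:ℝ) + 2 from by ring]
  rw [show (2 * ((k:ℝ) + 1) + 1 - 1) = 2 * (k:ℝ) + 2 from by ring]
  field_simp
  ring


lemma key_even (k : ℕ) (hk : 4 ≤ k) :
    (14*(k:ℝ)+4) * (Nat.centralBinom (2*k) : ℝ) <
      ((k:ℝ)+2)*(2*(k:ℝ)+1) * ((Nat.centralBinom k : ℝ) * (Nat.centralBinom (k+1) : ℝ)) := by
  set x : ℝ := (Nat.centralBinom (2*k) : ℝ) with hx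
  set y : ℝ := (Nat.centralBinom k : ℝ) with hy
  set z : ℝ := (Nat.centralBinom (k+1) : ℝ) with hz
  have hk' : (4:ℝ) ≤ (k:ℝ) := by exact_mod_cast hk
  have hxpos : (0:ℝ) < x := by rw [hx]; exact_mod_cast Nat.centralBinom_pos (2*k)
  have hypos : (0:ℝ) < y := by rw [hy]; exact_mod_cast Nat.centralBinom_pos k
  have hzpos : (0:ℝ) < z := by rw [hz]; exact_mod_cast Nat.centralBinom_pos (k+1)
  have hB := lemB (2*k)
  have hA1 := lemA k (by omega)
  have hA2 := lemA (k+1) (by omega)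
  rw [← hx] at hB; rw [← hy] at hA1; rw [← hz] at hA2
  push_cast at hB hA1 hA2
  have hsplit : (16:ℝ)^k * (16:ℝ)^(k+1) = 16 * (16:ℝ)^(2*k) := by
    rw [← pow_add]
    have : k + (k+1) = (2*k) + 1 := by omega
    rw [this, pow_succ]; ring
  have hpoly : (14*(k:ℝ)+4)^2*((k:ℝ)*((k:ℝ)+1)) < (6*(k:ℝ)+1)*((k:ℝ)+2)^2*(2*(k:ℝ)+1)^2 := by
    nlinarith [mul_nonneg (sub_nonneg.2 hk') (by positivity : (0:ℝ) ≤ 224 + 49*(k:ℝ) + 6*(k:ℝ)^2 + 24*(k:ℝ)^3 + 24*(k:ℝ)^4)]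
  have hmain : ((14*(k:ℝ)+4) * x)^2 * ((6*(k:ℝ)+1)*(16*(k:ℝ)*((k:ℝ)+1))) <
      (((k:ℝ)+2)*(2*(k:ℝ)+1) * (y*z))^2 * ((6*(k:ℝ)+1)*(16*(k:ℝ)*((k:ℝ)+1))) := by
    calc ((14*(k:ℝ)+4) * x)^2 * ((6*(k:ℝ)+1)*(16*(k:ℝ)*((k:ℝ)+1)))
        = ((14*(k:ℝ)+4)^2*(16*(k:ℝ)*((k:ℝ)+1))) * ((3*(2*(k:ℝ))+1) * x^2) := by ring
      _ ≤ ((14*(k:ℝ)+4)^2*(16*(k:ℝ)*((k:ℝ)+1))) * (16:ℝ)^(2*k) := by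
          apply mul_le_mul_of_nonneg_left hB (by positivity)
      _ = ((14*(k:ℝ)+4)^2*((k:ℝ)*((k:ℝ)+1))) * (16 * (16:ℝ)^(2*k)) := by ring
      _ < ((6*(k:ℝ)+1)*((k:ℝ)+2)^2*(2*(k:ℝ)+1)^2) * (16 * (16:ℝ)^(2*k)) := by
          apply mul_lt_mul_of_pos_right hpoly (by positivity)
      _ = ((6*(k:ℝ)+1)*((k:ℝ)+2)^2*(2*(k:ℝ)+1)^2) * ((16:ℝ)^k * (16:ℝ)^(k+1)) := by rw [hsplit]
      _ ≤ ((6*(k:ℝ)+1)*((k:ℝ)+2)^2*(2*(k:ℝ)+1)^2) * ((4*(k:ℝ)*y^2) * (4*((k:ℝ)+1)*z^2)) := by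
          apply mul_le_mul_of_nonneg_left _ (by positivity)
          exact mul_le_mul hA1 hA2 (by positivity) (by positivity)
      _ = (((k:ℝ)+2)*(2*(k:ℝ)+1) * (y*z))^2 * ((6*(k:ℝ)+1)*(16*(k:ℝ)*((k:ℝ)+1))) := by ring
  have hsq : ((14*(k:ℝ)+4) * x)^2 < (((k:ℝ)+2)*(2*(k:ℝ)+1) * (y*z))^2 :=
    lt_of_mul_lt_mul_right hmain (by positivity)
  have h := lt_of_pow_lt_pow_left₀ 2 (by positivity) hsq
  linarith

lemma key_odd (k : ℕ) (hk : 4 ≤ k) :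
    (7*(k:ℝ)+9)*((k:ℝ)+2)*(2*(k:ℝ)+1) * (Nat.centralBinom (2*k+1) : ℝ) <
      ((k:ℝ)+1)^2*((k:ℝ)+3)*(2*(k:ℝ)+3) * (Nat.centralBinom (k+1) : ℝ)^2 := by
  set x : ℝ := (Nat.centralBinom (2*k+1) : ℝ) with hx
  set z : ℝ := (Nat.centralBinom (k+1) : ℝ) with hz
  have hk' : (4:ℝ) ≤ (k:ℝ) := by exact_mod_cast hk
  have hxpos : (0:ℝ) < x := by rw [hx]; exact_mod_cast Nat.centralBinom_pos (2*k+1)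
  have hzpos : (0:ℝ) < z := by rw [hz]; exact_mod_cast Nat.centralBinom_pos (k+1)
  have hB := lemB (2*k+1)
  have hA := lemA (k+1) (by omega)
  rw [← hx] at hB; rw [← hz] at hA
  push_cast at hB hA
  have hsplit : (16:ℝ)^(k+1) * (16:ℝ)^(k+1) = 16 * (16:ℝ)^(2*k+1) := by
    rw [← pow_add]
    have : (k+1) + (k+1) = (2*k+1) + 1 := by omega
    rw [this, pow_succ]; ring
  have hA2 : (16:ℝ)^(k+1) * (16:ℝ)^(k+1) ≤ (4*((k:ℝ)+1)*z^2) * (4*((k:ℝ)+1)*z^2) :=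
    mul_le_mul hA hA (by positivity) (by positivity)
  have hpoly : (7*(k:ℝ)+9)^2*((k:ℝ)+2)^2*(2*(k:ℝ)+1)^2 <
      (6*(k:ℝ)+4)*((k:ℝ)+1)^2*((k:ℝ)+3)^2*(2*(k:ℝ)+3)^2 := by
    nlinarith [mul_nonneg (sub_nonneg.2 hk') (by positivity : (0:ℝ) ≤ 39574 + 9979*(k:ℝ) + 2834*(k:ℝ)^2 + 1183*(k:ℝ)^3 + 570*(k:ℝ)^4 + 180*(k:ℝ)^5 + 24*(k:ℝ)^6)]
  have hmain : ((7*(k:ℝ)+9)*((k:ℝ)+2)*(2*(k:ℝ)+1) * x)^2 * ((6*(k:ℝ)+4)*16*((k:ℝ)+1)^2) <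
      (((k:ℝ)+1)^2*((k:ℝ)+3)*(2*(k:ℝ)+3) * z^2)^2 * ((6*(k:ℝ)+4)*16*((k:ℝ)+1)^2) := by
    calc ((7*(k:ℝ)+9)*((k:ℝ)+2)*(2*(k:ℝ)+1) * x)^2 * ((6*(k:ℝ)+4)*16*((k:ℝ)+1)^2)
        = ((7*(k:ℝ)+9)^2*((k:ℝ)+2)^2*(2*(k:ℝ)+1)^2*(16*((k:ℝ)+1)^2)) * ((3*(2*(k:ℝ)+1)+1) * x^2) := by
          ring
      _ ≤ ((7*(k:ℝ)+9)^2*((k:ℝ)+2)^2*(2*(k:ℝ)+1)^2*(16*((k:ℝ)+1)^2)) * (16:ℝ)^(2*k+1) := by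
          apply mul_le_mul_of_nonneg_left hB (by positivity)
      _ = ((7*(k:ℝ)+9)^2*((k:ℝ)+2)^2*(2*(k:ℝ)+1)^2) * (((k:ℝ)+1)^2 * (16 * (16:ℝ)^(2*k+1))) := by ring
      _ < ((6*(k:ℝ)+4)*((k:ℝ)+1)^2*((k:ℝ)+3)^2*(2*(k:ℝ)+3)^2) * (((k:ℝ)+1)^2 * (16 * (16:ℝ)^(2*k+1))) := by
          apply mul_lt_mul_of_pos_right hpoly (by positivity)
      _ = ((6*(k:ℝ)+4)*((k:ℝ)+3)^2*(2*(k:ℝ)+3)^2*((k:ℝ)+1)^4) * ((16:ℝ)^(k+1) * (16:ℝ)^(k+1)) := by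
          rw [hsplit]; ring
      _ ≤ ((6*(k:ℝ)+4)*((k:ℝ)+3)^2*(2*(k:ℝ)+3)^2*((k:ℝ)+1)^4) * ((4*((k:ℝ)+1)*z^2) * (4*((k:ℝ)+1)*z^2)) := by
          apply mul_le_mul_of_nonneg_left hA2 (by positivity)
      _ = (((k:ℝ)+1)^2*((k:ℝ)+3)*(2*(k:ℝ)+3) * z^2)^2 * ((6*(k:ℝ)+4)*16*((k:ℝ)+1)^2) := by ring
  have hsq : ((7*(k:ℝ)+9)*((k:ℝ)+2)*(2*(k:ℝ)+1) * x)^2 < (((k:ℝ)+1)^2*((k:ℝ)+3)*(2*(k:ℝ)+3) * z^2)^2 :=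
    lt_of_mul_lt_mul_right hmain (by positivity)
  have h := lt_of_pow_lt_pow_left₀ 2 (by positivity) hsq
  linarith

/-- `p*_n(⌊n/2⌋) < q*_n(⌊n/2⌋)` for every integer `n > 5`. -/
theorem yhk_pda_clan_midpoint (n : ℕ) (hn : 5 < n) :
    pStar n (n / 2) < qStar n (n / 2) := by
  obtain ⟨m, hm⟩ : ∃ m, n = 2*m ∨ n = 2*m+1 := ⟨n/2, by omega⟩
  rcases hm with hm | hm
  · -- even case
    subst hm
    rw [show (2*m)/2 = m from by omega]
    rcases (by omega : m = 3 ∨ m = 4 ∨ 5 ≤ m) with h|h|h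
    · subst h; norm_num [pStar, qStar, phi, Nat.choose, Nat.factorial]
    · subst h; norm_num [pStar, qStar, phi, Nat.choose, Nat.factorial]
    · obtain ⟨k, rfl⟩ : ∃ k, m = k+1 := ⟨m-1, by omega⟩
      have hk4 : 4 ≤ k := by omega
      rw [pStar_even, qStar_even]
      have h1 : (0:ℝ) < ((k:ℝ)+2)*(2*(k:ℝ)+1) * (Nat.centralBinom (k+1) : ℝ) := by
        have : (0:ℝ) < (Nat.centralBinom (k+1) : ℝ) := by exact_mod_cast Nat.centralBinom_pos (k+1)
        positivity
      have h2 : (0:ℝ) < (Nat.centralBinom (2*k) : ℝ) := by exact_mod_cast Nat.centralBinom_pos (2*k)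
      rw [div_lt_div_iff₀ h1 h2]
      nlinarith [key_even k hk4]
  · -- odd case
    subst hm
    rw [show (2*m+1)/2 = m from by omega]
    rcases (by omega : m = 3 ∨ m = 4 ∨ 5 ≤ m) with h|h|h
    · subst h; norm_num [pStar, qStar, phi, Nat.choose, Nat.factorial]
    · subst h; norm_num [pStar, qStar, phi, Nat.choose, Nat.factorial]
    · obtain ⟨k, rfl⟩ : ∃ k, m = k+1 := ⟨m-1, by omega⟩
      have hk4 : 4 ≤ k := by omega
      rw [pStar_odd, qStar_odd]
      have hc1 : (0:ℝ) < (Nat.centralBinom (k+1) : ℝ) := by exact_mod_cast Nat.centralBinom_pos (k+1)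
      have hc2 : (0:ℝ) < (Nat.centralBinom (2*k+1) : ℝ) := by exact_mod_cast Nat.centralBinom_pos (2*k+1)
      have h1 : (0:ℝ) < ((k:ℝ)+1)*((k:ℝ)+3)*(2*(k:ℝ)+3) * (Nat.centralBinom (k+1) : ℝ) := by positivity
      have h2 : (0:ℝ) < (2*(k:ℝ)+1) * (Nat.centralBinom (2*k+1) : ℝ) := by positivity
      rw [div_lt_div_iff₀ h1 h2]
      nlinarith [key_odd k hk4]
end
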